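/- arXiv:2011.12701 — 4 statements merged into one kernel-verified Lean document; each statement's English description precedes it below -/
import Mathlib

section
/- Let f, g ∈ ℝ[x,y] be real polynomials whose Jacobian D(f,g) is a constant polynomial equal to a nonzero real number c. Then the Hamiltonian vector field H_f has no periodic orbits: there is no T > 0 and no differentiable curve γ : [0,T] → ℝ² with γ'(t) = H_f(γ(t)) for all t ∈ [0,T] and γ(T) = γ(0). -/
open MvPolynomial

/-- Evaluation of a bivariate real polynomial at a point of the plane. -/
noncomputable def evalP (f : MvPolynomial (Fin 2) ℝ) (p : ℝ × ℝ) : ℝ :=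
  eval ![p.1, p.2] f

/-- The Jacobian polynomial D(f,g) = f_x g_y - f_y g_x. -/
noncomputable def jacD (f g : MvPolynomial (Fin 2) ℝ) : MvPolynomial (Fin 2) ℝ :=
  pderiv 0 f * pderiv 1 g - pderiv 1 f * pderiv 0 g

/-- The Hamiltonian vector field H_f(p) = (-f_y(p), f_x(p)). -/
noncomputable def ham (f : MvPolynomial (Fin 2) ℝ) (p : ℝ × ℝ) : ℝ × ℝ :=
  (-(evalP (pderiv 1 f) p), evalP (pderiv 0 f) p)

lemma chain_rule (s : Set ℝ) (t : ℝ) (γ : ℝ → ℝ × ℝ) (v : ℝ × ℝ)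
    (h : HasDerivWithinAt γ v s t) (p : MvPolynomial (Fin 2) ℝ) :
    HasDerivWithinAt (fun τ => evalP p (γ τ))
      (evalP (pderiv 0 p) (γ t) * v.1 + evalP (pderiv 1 p) (γ t) * v.2) s t := by
  have h1 : HasDerivWithinAt (fun τ => (γ τ).1) v.1 s t := by
    have := (hasFDerivAt_fst (𝕜 := ℝ) (E := ℝ) (F := ℝ)).comp_hasDerivWithinAt t h
    exact this
  have h2 : HasDerivWithinAt (fun τ => (γ τ).2) v.2 s t := by
    have := (hasFDerivAt_snd (𝕜 := ℝ) (E := ℝ) (F := ℝ)).comp_hasDerivWithinAt t h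
    exact this
  induction p using MvPolynomial.induction_on with
  | C a => simp [evalP, hasDerivWithinAt_const]
  | add p q hp hq =>
      have : HasDerivWithinAt (fun τ => evalP p (γ τ) + evalP q (γ τ)) _ s t := hp.add hq
      simp only [evalP, map_add] at *
      convert this using 1
      ring
  | mul_X p i hp =>
      have hX : HasDerivWithinAt (fun τ => evalP (X i) (γ τ))
          (if i = 0 then v.1 else v.2) s t := by
        fin_cases i
        · simpa [evalP] using h1
        · simpa [evalP] using h2
      have : HasDerivWithinAt (fun τ => evalP p (γ τ) * evalP (X i) (γ τ)) _ s t := hp.mul hX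
      simp only [evalP, map_mul] at *
      convert this using 1
      fin_cases i <;>
        simp [pderiv_mul, evalP, Fin.ext_iff] <;> ring

/-- If D(f,g) is a nonzero constant, then H_f has no periodic orbit: there is no
T > 0 and differentiable curve γ on [0,T] solving γ' = H_f(γ) with γ(T) = γ(0). -/
theorem no_periodic_orbits (f g : MvPolynomial (Fin 2) ℝ) (c : ℝ) (hc : c ≠ 0)
    (hD : jacD f g = C c) :
    ¬ ∃ (T : ℝ) (γ : ℝ → ℝ × ℝ), 0 < T ∧
        (∀ t ∈ Set.Icc (0 : ℝ) T, HasDerivWithinAt γ (ham f (γ t)) (Set.Icc 0 T) t) ∧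
        γ T = γ 0 := by
  rintro ⟨T, γ, hT, hγ, hper⟩
  -- The function G τ = g(γ τ) - c τ has zero derivative on [0,T]
  have key : ∀ t ∈ Set.Icc (0 : ℝ) T,
      HasDerivWithinAt (fun τ => evalP g (γ τ) - c * τ) 0 (Set.Icc 0 T) t := by
    intro t ht
    have h1 := chain_rule _ t γ _ (hγ t ht) g
    have hval : evalP (pderiv 0 g) (γ t) * (ham f (γ t)).1
        + evalP (pderiv 1 g) (γ t) * (ham f (γ t)).2 = c := by
      have : evalP (jacD f g) (γ t) = c := by
        rw [hD]; simp [evalP]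
      simp only [jacD, evalP, map_sub, map_mul, ham] at this ⊢
      linarith [this]
    rw [hval] at h1
    have h2 : HasDerivWithinAt (fun τ : ℝ => c * τ) c (Set.Icc 0 T) t := by
      simpa using (hasDerivWithinAt_id t (Set.Icc 0 T)).const_mul c
    have h3 : HasDerivWithinAt (fun τ => evalP g (γ τ) - c * τ) (c - c) (Set.Icc 0 T) t := h1.sub h2
    rw [sub_self] at h3
    exact h3
  have hcont : ContinuousOn (fun τ => evalP g (γ τ) - c * τ) (Set.Icc 0 T) :=
    fun t ht => (key t ht).continuousWithinAt
  have hderiv : ∀ t ∈ Set.Ico (0 : ℝ) T,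
      HasDerivWithinAt (fun τ => evalP g (γ τ) - c * τ) 0 (Set.Ici t) t := by
    intro t ht
    exact (key t ⟨ht.1, ht.2.le⟩).mono_of_mem_nhdsWithin (Icc_mem_nhdsGE_of_mem ht)
  have hconst := constant_of_has_deriv_right_zero hcont hderiv T
    (Set.right_mem_Icc.mpr hT.le)
  rw [hper] at hconst
  have : c * T = 0 := by linarith
  rcases mul_eq_zero.mp this with h | h
  · exact hc h
  · exact hT.ne' h
end

section
/- Let f, g ∈ ℝ[x,y] be real polynomials whose Jacobian D(f,g) is a constant polynomial equal to a nonzero real number c, and let γ : ℝ → ℝ² be a differentiable curve with γ'(t) = H_f(γ(t)) for all t ∈ ℝ. Then ‖γ(t)‖ → ∞ as t → +∞ and as t → −∞ (every orbit of H_f has its positive and negative limits at infinity). -/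
open MvPolynomial

/-- Chain rule for evaluating a bivariate polynomial along a differentiable curve. -/
lemma hasDerivAt_eval_curve (g : MvPolynomial (Fin 2) ℝ) (x y : ℝ → ℝ) (x' y' t : ℝ)
    (hx : HasDerivAt x x' t) (hy : HasDerivAt y y' t) :
    HasDerivAt (fun s => eval ![x s, y s] g)
      (eval ![x t, y t] (pderiv 0 g) * x' + eval ![x t, y t] (pderiv 1 g) * y') t := by
  induction g using MvPolynomial.induction_on with
  | C a =>
      simpa using hasDerivAt_const t a
  | add p q hp hq =>
      have := hp.add hq
      simp only [map_add]
      exact this.congr_deriv (by ring)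
  | mul_X p i hp =>
      fin_cases i
      · have h1 : HasDerivAt (fun s => eval ![x s, y s] p * x s)
            ((eval ![x t, y t] (pderiv 0 p) * x' + eval ![x t, y t] (pderiv 1 p) * y') * x t
              + eval ![x t, y t] p * x') t := hp.mul hx
        have : HasDerivAt (fun s => eval ![x s, y s] (p * X 0))
            ((eval ![x t, y t] (pderiv 0 p) * x' + eval ![x t, y t] (pderiv 1 p) * y') * x t
              + eval ![x t, y t] p * x') t := by
          simpa [eval_mul] using h1
        refine this.congr_deriv ?_
        simp [pderiv_mul, pderiv_X, Pi.single_apply]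
        ring
      · have h1 : HasDerivAt (fun s => eval ![x s, y s] p * y s)
            ((eval ![x t, y t] (pderiv 0 p) * x' + eval ![x t, y t] (pderiv 1 p) * y') * y t
              + eval ![x t, y t] p * y') t := hp.mul hy
        have : HasDerivAt (fun s => eval ![x s, y s] (p * X 1))
            ((eval ![x t, y t] (pderiv 0 p) * x' + eval ![x t, y t] (pderiv 1 p) * y') * y t
              + eval ![x t, y t] p * y') t := by
          simpa [eval_mul] using h1
        refine this.congr_deriv ?_
        simp [pderiv_mul, pderiv_X, Pi.single_apply]
        ring

/-- If D(f,g) is a nonzero constant, every orbit of H_f defined on all of ℝ has its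
positive and negative limits at infinity. -/
theorem orbits_go_to_infinity (f g : MvPolynomial (Fin 2) ℝ) (c : ℝ) (hc : c ≠ 0)
    (hD : jacD f g = C c) (γ : ℝ → ℝ × ℝ)
    (hγ : ∀ t : ℝ, HasDerivAt γ (ham f (γ t)) t) :
    Filter.Tendsto (fun t => ‖γ t‖) Filter.atTop Filter.atTop ∧
      Filter.Tendsto (fun t => ‖γ t‖) Filter.atBot Filter.atTop := by
  -- component derivatives
  have hx : ∀ t, HasDerivAt (fun s => (γ s).1) (ham f (γ t)).1 t := by
    intro t
    have h := (hγ t).hasFDerivAt.fst.hasDerivAt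
    simpa using h
  have hy : ∀ t, HasDerivAt (fun s => (γ s).2) (ham f (γ t)).2 t := by
    intro t
    have h := (hγ t).hasFDerivAt.snd.hasDerivAt
    simpa using h
  -- h(t) := g(γ t) has derivative c
  set h : ℝ → ℝ := fun t => evalP g (γ t) with hh
  have hder : ∀ t, HasDerivAt h c t := by
    intro t
    have H := hasDerivAt_eval_curve g (fun s => (γ s).1) (fun s => (γ s).2)
      (ham f (γ t)).1 (ham f (γ t)).2 t (hx t) (hy t)
    have heq : eval ![(γ t).1, (γ t).2] (pderiv 0 g) * (ham f (γ t)).1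
        + eval ![(γ t).1, (γ t).2] (pderiv 1 g) * (ham f (γ t)).2 = c := by
      have := congrArg (eval ![(γ t).1, (γ t).2]) hD
      simp only [jacD, map_sub, map_mul, eval_C] at this
      simp only [ham, evalP]
      ring_nf
      ring_nf at this
      linarith
    exact (H.congr_deriv heq)
  -- hence h t = h 0 + c * t
  have hlin : ∀ t, h t = h 0 + c * t := by
    have hdiff : Differentiable ℝ (fun t => h t - c * t) := by
      intro t
      exact ((hder t).sub ((hasDerivAt_id t).const_mul c)).differentiableAt
    have hzero : ∀ t, deriv (fun t => h t - c * t) t = 0 := by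
      intro t
      have := ((hder t).sub ((hasDerivAt_id t).const_mul c)).deriv
      exact this.trans (by ring)
    intro t
    have := is_const_of_deriv_eq_zero hdiff hzero t 0
    simp at this
    linarith
  -- |h t| → ∞ in both directions
  have habs_top : Filter.Tendsto (fun t => |h t|) Filter.atTop Filter.atTop := by
    have h1 : Filter.Tendsto (fun t : ℝ => |c| * |t| - |h 0|) Filter.atTop Filter.atTop := by
      apply Filter.tendsto_atTop_add_const_right
      exact (Filter.tendsto_abs_atTop_atTop).const_mul_atTop (abs_pos.2 hc)
    refine Filter.tendsto_atTop_mono (fun t => ?_) h1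
    rw [hlin t]
    have : |c * t| - |h 0| ≤ |h 0 + c * t| := by
      have := abs_sub_abs_le_abs_sub (c * t) (-(h 0))
      simp at this
      calc |c * t| - |h 0| ≤ |c * t + h 0| := by
            have := abs_add_le (c * t + h 0) (-(h 0))
            simp at this
            linarith [abs_neg (h 0), abs_mul c t]
        _ = |h 0 + c * t| := by rw [add_comm]
    calc |c| * |t| - |h 0| = |c * t| - |h 0| := by rw [abs_mul]
      _ ≤ |h 0 + c * t| := this
  have habs_bot : Filter.Tendsto (fun t => |h t|) Filter.atBot Filter.atTop := by
    have h1 : Filter.Tendsto (fun t : ℝ => |c| * |t| - |h 0|) Filter.atBot Filter.atTop := by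
      apply Filter.tendsto_atTop_add_const_right
      have : Filter.Tendsto (fun t : ℝ => |t|) Filter.atBot Filter.atTop :=
        Filter.tendsto_abs_atBot_atTop
      exact this.const_mul_atTop (abs_pos.2 hc)
    refine Filter.tendsto_atTop_mono (fun t => ?_) h1
    rw [hlin t]
    have : |c * t| - |h 0| ≤ |h 0 + c * t| := by
      calc |c * t| - |h 0| ≤ |c * t + h 0| := by
            have := abs_add_le (c * t + h 0) (-(h 0))
            simp at this
            linarith [abs_neg (h 0), abs_mul c t]
        _ = |h 0 + c * t| := by rw [add_comm]
    calc |c| * |t| - |h 0| = |c * t| - |h 0| := by rw [abs_mul]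
      _ ≤ |h 0 + c * t| := this
  -- continuity of evalP g
  have hcont : Continuous (evalP g) := by
    have h1 : Continuous fun v : Fin 2 → ℝ => eval v g := g.continuous_eval
    have h2 : Continuous fun p : ℝ × ℝ => (![p.1, p.2] : Fin 2 → ℝ) := by
      apply continuous_pi
      intro i
      fin_cases i <;> simp [continuous_fst, continuous_snd]
    exact h1.comp h2
  -- key: if |evalP g (γ t)| → ∞ along a filter, then ‖γ t‖ → ∞
  have key : ∀ l : Filter ℝ, Filter.Tendsto (fun t => |h t|) l Filter.atTop →
      Filter.Tendsto (fun t => ‖γ t‖) l Filter.atTop := by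
    intro l hl
    rw [Filter.tendsto_atTop]
    intro b
    have hK : IsCompact (Metric.closedBall (0 : ℝ × ℝ) b) := isCompact_closedBall 0 b
    obtain ⟨B, hB⟩ : ∃ B, ∀ p ∈ Metric.closedBall (0 : ℝ × ℝ) b, |evalP g p| ≤ B := by
      obtain ⟨B, hB⟩ := (hK.image (continuous_abs.comp hcont)).bddAbove
      exact ⟨B, fun p hp => hB ⟨p, hp, rfl⟩⟩
    have hev : ∀ᶠ t in l, B < |h t| := hl.eventually_gt_atTop B
    filter_upwards [hev] with t ht
    by_contra hcon
    push_neg at hcon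
    have : γ t ∈ Metric.closedBall (0 : ℝ × ℝ) b := by
      simp [Metric.mem_closedBall, dist_zero_right]
      exact le_of_lt hcon
    exact absurd (hB _ this) (by simpa [hh] using not_le.2 ht)
  exact ⟨key _ habs_top, key _ habs_bot⟩
end

section
/- Let f = 1 + x − x²y ∈ ℝ[x,y]. Then there is no polynomial g ∈ ℝ[x,y] such that the Jacobian D(f,g) is a constant polynomial equal to a nonzero real number (f has no Jacobian mate with constant nonzero Jacobian). -/
open MvPolynomial

lemma coeff_pderiv {σ : Type*} [DecidableEq σ] (i : σ) (p : MvPolynomial σ ℝ) (m : σ →₀ ℕ) :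
    coeff m (pderiv i p) = ((m i : ℝ) + 1) * coeff (m + Finsupp.single i 1) p := by
  induction p using MvPolynomial.induction_on' with
  | add p q hp hq => simp [map_add, coeff_add, hp, hq, mul_add]
  | monomial s a =>
    rw [pderiv_monomial, coeff_monomial, coeff_monomial]
    by_cases h2 : s = m + Finsupp.single i 1
    · have h1 : s - Finsupp.single i 1 = m := by
        rw [h2, add_tsub_cancel_right]
      have hsi : s i = m i + 1 := by simp [h2]
      rw [if_pos h1, if_pos h2, hsi]
      push_cast
      ring
    · rw [if_neg h2, mul_zero]
      by_cases h1 : s - Finsupp.single i 1 = m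
      · rw [if_pos h1]
        by_cases hsi : s i = 0
        · simp [hsi]
        · exfalso
          apply h2
          rw [← h1, tsub_add_cancel_of_le]
          rwa [Finsupp.single_le_iff, Nat.one_le_iff_ne_zero]
      · rw [if_neg h1]

lemma pinchuk_step (g : MvPolynomial (Fin 2) ℝ) (c : ℝ)
    (E : pderiv 1 g - C 2 * (X 0 * (X 1 * pderiv 1 g)) + X 0 * (X 0 * pderiv 0 g)
        = C c) (k : ℕ) :
    coeff (Finsupp.single 0 (k+1) + Finsupp.single 1 (k+2)) g
      = coeff (Finsupp.single 0 k + Finsupp.single 1 (k+1)) g := by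
  set m : Fin 2 →₀ ℕ := Finsupp.single 0 (k+1) + Finsupp.single 1 (k+1) with hm
  have h := congrArg (coeff m) E
  rw [coeff_add, coeff_sub, coeff_C_mul] at h
  -- RHS is 0
  have hmne : m ≠ 0 := by
    intro h0
    have : m 0 = 0 := by rw [h0]; rfl
    simp [hm, Finsupp.single_apply] at this
  rw [coeff_C, if_neg (fun hh => hmne hh.symm)] at h
  -- Term 1
  have t1 : coeff m (pderiv 1 g)
      = ((k : ℝ) + 2) * coeff (Finsupp.single 0 (k+1) + Finsupp.single 1 (k+2)) g := by
    rw [_root_.coeff_pderiv]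
    have e1 : m + Finsupp.single 1 1 = Finsupp.single 0 (k+1) + Finsupp.single 1 (k+2) := by
      rw [hm, add_assoc, ← Finsupp.single_add]
    have e2 : m 1 = k + 1 := by simp [hm, Finsupp.single_apply]
    rw [e1, e2]
    push_cast
    ring_nf
  -- Term 2
  have t2 : coeff m (X 0 * (X 1 * pderiv 1 g))
      = ((k : ℝ) + 1) * coeff (Finsupp.single 0 k + Finsupp.single 1 (k+1)) g := by
    have meq : m = Finsupp.single 0 1 + (Finsupp.single 1 1
        + (Finsupp.single 0 k + Finsupp.single 1 k)) := by
      ext a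
      fin_cases a <;> simp [hm, Finsupp.single_apply] <;> omega
    rw [meq, coeff_X_mul, coeff_X_mul, _root_.coeff_pderiv]
    have e1 : Finsupp.single (0 : Fin 2) k + Finsupp.single 1 k + Finsupp.single 1 1
        = Finsupp.single 0 k + Finsupp.single 1 (k+1) := by
      rw [add_assoc, ← Finsupp.single_add]
    have e2 : (Finsupp.single (0 : Fin 2) k + Finsupp.single 1 k : Fin 2 →₀ ℕ) 1 = k := by
      simp [Finsupp.single_apply]
    rw [e1, e2]
  -- Term 3
  have t3 : coeff m (X 0 * (X 0 * pderiv 0 g))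
      = (k : ℝ) * coeff (Finsupp.single 0 k + Finsupp.single 1 (k+1)) g := by
    cases k with
    | zero =>
      have meq : m = Finsupp.single 0 1 + Finsupp.single 1 1 := by
        ext a
        fin_cases a <;> simp [hm, Finsupp.single_apply]
      rw [meq, coeff_X_mul, coeff_X_mul']
      simp [Finsupp.single_apply]
    | succ n =>
      have meq : m = Finsupp.single 0 1 + (Finsupp.single 0 1
          + (Finsupp.single 0 n + Finsupp.single 1 (n+2))) := by
        ext a
        fin_cases a <;> simp [hm, Finsupp.single_apply] <;> omega
      rw [meq, coeff_X_mul, coeff_X_mul, _root_.coeff_pderiv]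
      have e1 : Finsupp.single (0 : Fin 2) n + Finsupp.single 1 (n+2) + Finsupp.single 0 1
          = Finsupp.single 0 (n+1) + Finsupp.single 1 (n+2) := by
        rw [add_comm (Finsupp.single (0:Fin 2) n), add_assoc, ← Finsupp.single_add,
          add_comm (Finsupp.single (1:Fin 2) (n+2))]
      have e2 : (Finsupp.single (0 : Fin 2) n + Finsupp.single 1 (n+2) : Fin 2 →₀ ℕ) 0 = n := by
        simp [Finsupp.single_apply]
      rw [e1, e2]
      push_cast
      ring
  rw [t1, t2, t3] at h
  set A := coeff (Finsupp.single (0:Fin 2) (k+1) + Finsupp.single 1 (k+2)) g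
  set B := coeff (Finsupp.single (0:Fin 2) k + Finsupp.single 1 (k+1)) g
  have key : ((k : ℝ) + 2) * A = ((k : ℝ) + 2) * B := by linarith
  exact mul_left_cancel₀ (by positivity) key

/-- The Pinchuk-type polynomial f = 1 + x - x²y has no polynomial g with
D(f,g) a nonzero constant. -/
theorem pinchuk_f_has_no_jacobian_mate :
    ¬ ∃ (g : MvPolynomial (Fin 2) ℝ) (c : ℝ), c ≠ 0 ∧
        jacD (1 + X 0 - (X 0) ^ 2 * X 1) g = C c := by
  rintro ⟨g, c, hc, h⟩
  -- Rewrite the Jacobian equation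
  have d0 : pderiv (0 : Fin 2) (1 + X 0 - (X 0) ^ 2 * X 1 : MvPolynomial (Fin 2) ℝ)
      = 1 - 2 * (X 0 * X 1) := by
    simp only [pow_two, map_add, map_sub, pderiv_one, pderiv_mul, pderiv_X_self]
    simp [pderiv_X]
    ring
  have d1 : pderiv (1 : Fin 2) (1 + X 0 - (X 0) ^ 2 * X 1 : MvPolynomial (Fin 2) ℝ)
      = -((X 0) ^ 2) := by
    simp only [pow_two, map_add, map_sub, pderiv_one, pderiv_mul, pderiv_X_self]
    simp [pderiv_X]
  rw [jacD, d0, d1] at h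
  have E : pderiv 1 g - C 2 * (X 0 * (X 1 * pderiv 1 g)) + X 0 * (X 0 * pderiv 0 g)
      = C c := by
    have h2 : (C 2 : MvPolynomial (Fin 2) ℝ) = 2 := map_ofNat C 2
    rw [h2]
    linear_combination h
  -- base case : coefficient of y in g is c
  have base : coeff (Finsupp.single (0:Fin 2) 0 + Finsupp.single 1 1) g = c := by
    have h0 := congrArg (coeff (0 : Fin 2 →₀ ℕ)) E
    simp [_root_.coeff_pderiv, coeff_X_mul'] at h0
    simpa [Finsupp.single_zero] using h0
  -- all diagonal coefficients equal c
  have diag : ∀ k : ℕ, coeff (Finsupp.single (0:Fin 2) k + Finsupp.single 1 (k+1)) g = c := by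
    intro k
    induction k with
    | zero => exact base
    | succ n ih => rw [pinchuk_step g c E n]; exact ih
  -- contradiction with total degree
  set N := g.totalDegree
  have hd := diag N
  have hmem : Finsupp.single (0:Fin 2) N + Finsupp.single 1 (N+1) ∈ g.support := by
    rw [mem_support_iff, hd]; exact hc
  have hle := le_totalDegree hmem
  have hsum : ((Finsupp.single (0:Fin 2) N + Finsupp.single 1 (N+1)).sum fun _ e => e)
      = N + (N + 1) := by
    simp [Finsupp.sum_add_index', Finsupp.sum_single_index]
  rw [hsum] at hle
  omega
end

section
/- Consider the polynomials f = −(1+x²)·y and g = x in ℝ[x,y]; their Jacobian D(f,g) = 1 + x² is nonvanishing on ℝ² but not constant. The flow of the Hamiltonian vector field H_f = (1+x², −2xy) is not complete: there is no differentiable curve γ : ℝ → ℝ² defined on all of ℝ with γ(0) = (0,0) and γ'(t) = (1 + γ₁(t)², −2·γ₁(t)·γ₂(t)) for all t ∈ ℝ. -/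
open MvPolynomial

/-!
The first coordinate of an integral curve of `H_f = (1 + x², -2xy)` solves the Riccati equation
`x' = 1 + x²`, along which `arctan x - t` is constant. So `arctan x` grows at unit speed, which is
impossible for all time since `arctan` takes values in `(-π/2, π/2)`: every solution blows up
within time `π`.
-/

lemma evalP_one_add_X_zero_sq (p : ℝ × ℝ) :
    evalP (1 + X 0 ^ 2) p = 1 + p.1 ^ 2 := by
  simp [evalP]

lemma not_exists_eq_C_of_evalP_ne {f : MvPolynomial (Fin 2) ℝ} {p q : ℝ × ℝ}
    (h : evalP f p ≠ evalP f q) : ¬ ∃ c : ℝ, f = C c := by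
  rintro ⟨c, rfl⟩
  simp [evalP] at h

lemma jacD_neg_one_add_sq_mul_X_one :
    jacD (-((1 + X 0 ^ 2) * X 1)) (X 0) = (1 + X 0 ^ 2 : MvPolynomial (Fin 2) ℝ) := by
  simp [jacD, pow_two]

lemma ham_neg_one_add_sq_mul_X_one (p : ℝ × ℝ) :
    ham (-((1 + X 0 ^ 2) * X 1)) p = (1 + p.1 ^ 2, -2 * p.1 * p.2) := by
  simp [ham, evalP, pow_two]
  ring

lemma arctan_sub_eq_of_hasDerivAt_one_add_sq {x : ℝ → ℝ}
    (hx : ∀ t, HasDerivAt x (1 + x t ^ 2) t) (s t : ℝ) :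
    Real.arctan (x t) - t = Real.arctan (x s) - s := by
  have hderiv : ∀ t, HasDerivAt (fun t => Real.arctan (x t) - t) 0 t := fun t => by
    have h := ((hx t).arctan).sub (hasDerivAt_id' t)
    rwa [one_div, inv_mul_cancel₀ (by positivity), sub_self] at h
  exact is_const_of_deriv_eq_zero (fun t => (hderiv t).differentiableAt)
    (fun t => (hderiv t).deriv) t s

theorem not_exists_forall_hasDerivAt_one_add_sq :
    ¬ ∃ x : ℝ → ℝ, ∀ t, HasDerivAt x (1 + x t ^ 2) t := by
  rintro ⟨x, hx⟩
  have h := arctan_sub_eq_of_hasDerivAt_one_add_sq hx 0 Real.pi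
  linarith [Real.arctan_lt_pi_div_two (x Real.pi), Real.neg_pi_div_two_lt_arctan (x 0)]

/-- For f = -(1+x²)y and g = x, the Jacobian D(f,g) = 1 + x² is nonvanishing but not
constant, H_f = (1+x², -2xy), and the flow of H_f is not complete: no solution of
γ' = H_f(γ) through the origin is defined on all of ℝ. -/
theorem ham_flow_not_complete_example :
    jacD (-((1 + (X 0) ^ 2) * X 1)) (X 0) = 1 + (X 0) ^ 2 ∧
    (∀ p : ℝ × ℝ, evalP (jacD (-((1 + (X 0) ^ 2) * X 1)) (X 0)) p ≠ 0) ∧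
    (¬ ∃ c : ℝ, jacD (-((1 + (X 0) ^ 2) * X 1)) (X 0) = C c) ∧
    (∀ p : ℝ × ℝ, ham (-((1 + (X 0) ^ 2) * X 1)) p = (1 + p.1 ^ 2, -2 * p.1 * p.2)) ∧
    ¬ ∃ γ : ℝ → ℝ × ℝ, γ 0 = (0, 0) ∧
        ∀ t : ℝ, HasDerivAt γ (1 + (γ t).1 ^ 2, -2 * (γ t).1 * (γ t).2) t := by
  rw [jacD_neg_one_add_sq_mul_X_one]
  refine ⟨rfl, fun p => ?_, ?_, ham_neg_one_add_sq_mul_X_one, ?_⟩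
  · rw [evalP_one_add_X_zero_sq]
    positivity
  · apply not_exists_eq_C_of_evalP_ne (p := (0, 0)) (q := (1, 0))
    norm_num [evalP_one_add_X_zero_sq]
  · rintro ⟨γ, -, hγ⟩
    exact not_exists_forall_hasDerivAt_one_add_sq ⟨fun t => (γ t).1, fun t => (hγ t).fst⟩
end
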